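/- Let α ∈ (0,1), λ > 0 and G_λ(r) = λ^α K_α(λ r). Then the radial function x ↦ G_λ(|x|) on ℝ² \ {0} satisfies the distributional equation ((-i∇ + A_α)² + λ²) G_λ = 0 on ℝ² \ {0}, where A_α(x) = α x^⊥/|x|² with x^⊥ = (-y, x). -/

import Mathlib

/-!
Differentiating under the integral sign, `(-1)ⁿ K_α⁽ⁿ⁾(x) = ∫₀^∞ e^{-x cosh t} coshⁿ t cosh(αt) dt`;
these integrals converge for `x > 0` because the integrand is `O(e^{-t})`. The modified Bessel
equation `x² K'' + x K' - (x² + α²) K = 0` follows because its integrand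
`e^{-x cosh t} cosh(αt) (x² cosh² t - x cosh t - x² - α²)` is the `t`-derivative of
`-e^{-x cosh t} (x sinh t cosh(αt) + α sinh(αt))`, which vanishes at `0` and at `∞`.
On the plane the Laplacian of a radial function `g(|p|)` is `g''(r) + g'(r)/r`, so for
`g(r) = λ^α K_α(λr)` the equation to prove is the Bessel equation at `λr`.
-/

open MeasureTheory Real

/-- The modified Bessel function of the second kind, via its integral representation. -/
noncomputable def besselK (α x : ℝ) : ℝ :=
  ∫ t in Set.Ioi (0 : ℝ), Real.exp (-x * Real.cosh t) * Real.cosh (α * t)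

/-- The radial function `x ↦ G_λ(|x|)` on `ℝ²`, where `G_λ(r) = λ^α K_α(λ r)`. -/
noncomputable def Grad2 (α lam : ℝ) : ℝ × ℝ → ℝ :=
  fun p => lam ^ α * besselK α (lam * Real.sqrt (p.1 ^ 2 + p.2 ^ 2))

open Set Filter Topology

lemma cosh_le_exp_abs (s : ℝ) : cosh s ≤ exp |s| := by
  rw [← cosh_abs, cosh_eq]
  have : exp (-|s|) ≤ exp |s| := exp_le_exp.mpr (by linarith [abs_nonneg s])
  linarith

lemma sq_div_four_le_cosh {t : ℝ} (ht : 0 ≤ t) : t ^ 2 / 4 ≤ cosh t := by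
  have := quadratic_le_exp_of_nonneg ht
  rw [cosh_eq]
  nlinarith [exp_pos (-t)]

lemma abs_sinh_le_cosh (s : ℝ) : |sinh s| ≤ cosh s := by
  rw [abs_sinh, ← cosh_abs]
  exact (sinh_lt_cosh _).le

noncomputable def besselKIntegrand (α : ℝ) (n : ℕ) (x t : ℝ) : ℝ :=
  exp (-x * cosh t) * cosh t ^ n * cosh (α * t)

noncomputable def besselKMoment (α : ℝ) (n : ℕ) (x : ℝ) : ℝ :=
  ∫ t in Ioi 0, besselKIntegrand α n x t

variable {x : ℝ}

lemma besselKMoment_zero (α : ℝ) : besselKMoment α 0 = besselK α := by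
  ext x
  simp [besselKMoment, besselKIntegrand, besselK]

lemma continuous_besselKIntegrand (α : ℝ) (n : ℕ) (x : ℝ) :
    Continuous (besselKIntegrand α n x) := by
  unfold besselKIntegrand; fun_prop

lemma besselKIntegrand_nonneg (α : ℝ) (n : ℕ) (x t : ℝ) : 0 ≤ besselKIntegrand α n x t := by
  unfold besselKIntegrand; positivity

lemma besselKIntegrand_le_of_le {α : ℝ} {n : ℕ} {x y : ℝ} (hxy : x ≤ y) (t : ℝ) :
    besselKIntegrand α n y t ≤ besselKIntegrand α n x t := by
  unfold besselKIntegrand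
  gcongr

lemma besselKIntegrand_le_exp {α : ℝ} {n : ℕ} (hx : 0 < x) {t : ℝ} (ht : 0 ≤ t) :
    besselKIntegrand α n x t ≤ exp ((n + |α| + 1) ^ 2 / x) * exp (-t) := by
  set d := (n : ℝ) + |α| + 1
  have hpow : cosh t ^ n ≤ exp (n * t) := by
    calc cosh t ^ n ≤ exp |t| ^ n := by gcongr; exact cosh_le_exp_abs t
      _ = exp (n * t) := by rw [abs_of_nonneg ht, ← exp_nat_mul]
  have hcosh : cosh (α * t) ≤ exp (|α| * t) := by
    simpa [abs_mul, abs_of_nonneg ht] using cosh_le_exp_abs (α * t)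
  -- completing the square against `cosh t ≥ t²/4`
  have hexp : -x * cosh t + n * t + |α| * t ≤ d ^ 2 / x - t := by
    have hsq : x * (t ^ 2 / 4) - d * t + d ^ 2 / x = (x * t / 2 - d) ^ 2 / x := by
      field_simp; ring
    have := sq_div_four_le_cosh ht
    nlinarith [div_nonneg (sq_nonneg (x * t / 2 - d)) hx.le]
  calc besselKIntegrand α n x t ≤ exp (-x * cosh t) * exp (n * t) * exp (|α| * t) := by
        unfold besselKIntegrand; gcongr
    _ = exp (-x * cosh t + n * t + |α| * t) := by rw [exp_add, exp_add]
    _ ≤ exp (d ^ 2 / x - t) := exp_le_exp.mpr hexp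
    _ = exp (d ^ 2 / x) * exp (-t) := by rw [sub_eq_add_neg, exp_add]

lemma integrableOn_besselKIntegrand (α : ℝ) (n : ℕ) (hx : 0 < x) :
    IntegrableOn (besselKIntegrand α n x) (Ioi 0) := by
  refine Integrable.mono' ((exp_neg_integrableOn_Ioi 0 one_pos).const_mul
    (exp ((n + |α| + 1) ^ 2 / x))) (continuous_besselKIntegrand α n x).aestronglyMeasurable ?_
  filter_upwards [ae_restrict_mem measurableSet_Ioi] with t ht
  rw [norm_of_nonneg (besselKIntegrand_nonneg α n x t), neg_one_mul]
  exact besselKIntegrand_le_exp hx (le_of_lt ht)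

lemma tendsto_besselKIntegrand_atTop (α : ℝ) (n : ℕ) (hx : 0 < x) :
    Tendsto (besselKIntegrand α n x) atTop (𝓝 0) := by
  have hdecay : Tendsto (fun t => exp ((n + |α| + 1) ^ 2 / x) * exp (-t)) atTop (𝓝 0) := by
    simpa using (tendsto_exp_neg_atTop_nhds_zero).const_mul (exp ((n + |α| + 1) ^ 2 / x))
  refine squeeze_zero' (Eventually.of_forall (besselKIntegrand_nonneg α n x)) ?_ hdecay
  filter_upwards [eventually_ge_atTop 0] with t ht
  exact besselKIntegrand_le_exp hx ht

lemma hasDerivAt_besselKIntegrand (α : ℝ) (n : ℕ) (x t : ℝ) :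
    HasDerivAt (besselKIntegrand α n · t) (-besselKIntegrand α (n + 1) x t) x := by
  have hlin : HasDerivAt (fun y => -y * cosh t) (-cosh t) x := by
    simpa using (hasDerivAt_neg x).mul_const (cosh t)
  have hfun : (besselKIntegrand α n · t)
      = fun y => exp (-y * cosh t) * (cosh t ^ n * cosh (α * t)) := funext fun y => mul_assoc _ _ _
  rw [hfun]
  exact (hlin.exp.mul_const _).congr_deriv (by unfold besselKIntegrand; ring)

lemma hasDerivAt_besselKMoment (α : ℝ) (n : ℕ) (hx : 0 < x) :
    HasDerivAt (besselKMoment α n) (-besselKMoment α (n + 1) x) x := by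
  have hmeas : ∀ m y, AEStronglyMeasurable (besselKIntegrand α m y) (volume.restrict (Ioi 0)) :=
    fun m y => (continuous_besselKIntegrand α m y).aestronglyMeasurable
  have key := hasDerivAt_integral_of_dominated_loc_of_deriv_le (x₀ := x)
    (F' := fun y t => -besselKIntegrand α (n + 1) y t) (Ioi_mem_nhds (half_lt_self hx))
    (Eventually.of_forall (hmeas n)) (integrableOn_besselKIntegrand α n hx) (hmeas (n + 1) x).neg
    (Eventually.of_forall fun t y (hy : x / 2 < y) => ?_)
    (integrableOn_besselKIntegrand α (n + 1) (half_pos hx))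
    (Eventually.of_forall fun t y _ => hasDerivAt_besselKIntegrand α n y t)
  · rw [integral_neg] at key
    exact key.2
  · rw [norm_neg, norm_of_nonneg (besselKIntegrand_nonneg _ _ _ _)]
    exact besselKIntegrand_le_of_le hy.le t

noncomputable def besselKFlux (α x t : ℝ) : ℝ :=
  -(exp (-x * cosh t) * (x * sinh t * cosh (α * t) + α * sinh (α * t)))

lemma hasDerivAt_besselKFlux (α x t : ℝ) :
    HasDerivAt (besselKFlux α x) (x ^ 2 * besselKIntegrand α 2 x t - x * besselKIntegrand α 1 x t
      - (x ^ 2 + α ^ 2) * besselKIntegrand α 0 x t) t := by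
  have hlin : HasDerivAt (fun s => α * s) α t := by simpa using (hasDerivAt_id t).const_mul α
  have hexp := ((hasDerivAt_cosh t).const_mul (-x)).exp
  have hbracket :=
    (((hasDerivAt_sinh t).const_mul x).mul ((hasDerivAt_cosh (α * t)).comp t hlin)).add
      (((hasDerivAt_sinh (α * t)).comp t hlin).const_mul α)
  refine (hexp.mul hbracket).neg.congr_deriv ?_
  simp only [besselKIntegrand, Pi.add_apply, Pi.mul_apply, Function.comp_apply]
  linear_combination (exp (-x * cosh t) * x ^ 2 * cosh (α * t)) * sinh_sq t

lemma abs_besselKFlux_le {α : ℝ} (hx : 0 ≤ x) (t : ℝ) :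
    |besselKFlux α x t| ≤ x * besselKIntegrand α 1 x t + |α| * besselKIntegrand α 0 x t := by
  have hbracket : |x * sinh t * cosh (α * t) + α * sinh (α * t)|
      ≤ x * cosh t * cosh (α * t) + |α| * cosh (α * t) := by
    refine (abs_add_le _ _).trans ?_
    rw [abs_mul, abs_mul, abs_mul, abs_of_nonneg hx, abs_of_pos (cosh_pos _)]
    gcongr <;> exact abs_sinh_le_cosh _
  calc |besselKFlux α x t|
      = exp (-x * cosh t) * |x * sinh t * cosh (α * t) + α * sinh (α * t)| := by
        rw [besselKFlux, abs_neg, abs_mul, abs_exp]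
    _ ≤ exp (-x * cosh t) * (x * cosh t * cosh (α * t) + |α| * cosh (α * t)) := by gcongr
    _ = x * besselKIntegrand α 1 x t + |α| * besselKIntegrand α 0 x t := by
        simp only [besselKIntegrand]; ring

lemma besselKMoment_ode (α : ℝ) (hx : 0 < x) :
    x ^ 2 * besselKMoment α 2 x - x * besselKMoment α 1 x - (x ^ 2 + α ^ 2) * besselKMoment α 0 x
      = 0 := by
  have hI (m : ℕ) := integrableOn_besselKIntegrand α m hx
  have hflux : Tendsto (besselKFlux α x) atTop (𝓝 0) := by
    have hbound := ((tendsto_besselKIntegrand_atTop α 1 hx).const_mul x).add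
      ((tendsto_besselKIntegrand_atTop α 0 hx).const_mul |α|)
    simp only [mul_zero, add_zero] at hbound
    exact squeeze_zero_norm (abs_besselKFlux_le hx.le) hbound
  have h2 : IntegrableOn (fun t => x ^ 2 * besselKIntegrand α 2 x t) (Ioi 0) := (hI 2).const_mul _
  have h1 : IntegrableOn (fun t => x * besselKIntegrand α 1 x t) (Ioi 0) := (hI 1).const_mul _
  have h0 : IntegrableOn (fun t => (x ^ 2 + α ^ 2) * besselKIntegrand α 0 x t) (Ioi 0) :=
    (hI 0).const_mul _
  have h21 : IntegrableOn (fun t => x ^ 2 * besselKIntegrand α 2 x t - x * besselKIntegrand α 1 x t)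
    (Ioi 0) := h2.sub h1
  have hFTC := integral_Ioi_of_hasDerivAt_of_tendsto' (fun t _ => hasDerivAt_besselKFlux α x t)
    (h21.sub h0) hflux
  rw [integral_sub h21 h0, integral_sub h2 h1, integral_const_mul, integral_const_mul,
    integral_const_mul] at hFTC
  simpa [besselKFlux, besselKMoment] using hFTC

lemma hasDerivAt_comp_sqrt_sq_add {g g' : ℝ → ℝ} {c s : ℝ} (hpos : 0 < s ^ 2 + c)
    (hg : HasDerivAt g (g' √(s ^ 2 + c)) √(s ^ 2 + c)) :
    HasDerivAt (fun t => g √(t ^ 2 + c)) (g' √(s ^ 2 + c) * (s / √(s ^ 2 + c))) s := by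
  have hsq : HasDerivAt (fun t => t ^ 2 + c) (2 * s) s := by
    simpa using (hasDerivAt_pow 2 s).add_const c
  refine (hg.comp s (hsq.sqrt hpos.ne')).congr_deriv ?_
  field_simp

lemma deriv_deriv_comp_sqrt_sq_add {g g' g'' : ℝ → ℝ} (hg : ∀ r, 0 < r → HasDerivAt g (g' r) r)
    (hg' : ∀ r, 0 < r → HasDerivAt g' (g'' r) r) {c s : ℝ} (hpos : 0 < s ^ 2 + c) :
    deriv (fun u => deriv (fun t => g √(t ^ 2 + c)) u) s
      = g'' √(s ^ 2 + c) * (s ^ 2 / (s ^ 2 + c))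
        + g' √(s ^ 2 + c) * (c / (s ^ 2 + c) / √(s ^ 2 + c)) := by
  have hfirst : (fun u => deriv (fun t => g √(t ^ 2 + c)) u)
      =ᶠ[𝓝 s] fun u => g' √(u ^ 2 + c) * (u / √(u ^ 2 + c)) := by
    have hnear : ∀ᶠ u in 𝓝 s, 0 < u ^ 2 + c :=
      (continuous_id.pow 2 |>.add continuous_const).continuousAt.eventually (lt_mem_nhds hpos)
    filter_upwards [hnear] with u hu
    exact (hasDerivAt_comp_sqrt_sq_add hu (hg _ (sqrt_pos.mpr hu))).deriv
  have hRpos : 0 < √(s ^ 2 + c) := sqrt_pos.mpr hpos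
  have hquot : HasDerivAt (fun u => u / √(u ^ 2 + c))
      ((1 * √(s ^ 2 + c) - s * (1 * (s / √(s ^ 2 + c)))) / √(s ^ 2 + c) ^ 2) s :=
    (hasDerivAt_id s).div
      (hasDerivAt_comp_sqrt_sq_add (g' := fun _ => 1) hpos (hasDerivAt_id' _)) hRpos.ne'
  rw [hfirst.deriv_eq, ((hasDerivAt_comp_sqrt_sq_add hpos (hg' _ hRpos)).fun_mul hquot).deriv]
  generalize hR : √(s ^ 2 + c) = R at hRpos ⊢
  have hR2 : s ^ 2 + c = R ^ 2 := by rw [← hR, sq_sqrt hpos.le]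
  rw [hR2]
  field_simp
  linear_combination (-g' R) * hR2

lemma laplacian_of_radial {F : ℝ × ℝ → ℝ} {g g' g'' : ℝ → ℝ}
    (hF : ∀ q : ℝ × ℝ, F q = g √(q.1 ^ 2 + q.2 ^ 2))
    (hg : ∀ r, 0 < r → HasDerivAt g (g' r) r) (hg' : ∀ r, 0 < r → HasDerivAt g' (g'' r) r)
    {p : ℝ × ℝ} (hp : 0 < p.1 ^ 2 + p.2 ^ 2) :
    deriv (fun s => deriv (fun t => F (t, p.2)) s) p.1
        + deriv (fun s => deriv (fun t => F (p.1, t)) s) p.2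
      = g'' √(p.1 ^ 2 + p.2 ^ 2) + g' √(p.1 ^ 2 + p.2 ^ 2) / √(p.1 ^ 2 + p.2 ^ 2) := by
  have h1 : (fun t => F (t, p.2)) = fun t => g √(t ^ 2 + p.2 ^ 2) := funext fun t => hF (t, p.2)
  have h2 : (fun t => F (p.1, t)) = fun t => g √(t ^ 2 + p.1 ^ 2) :=
    funext fun t => by rw [hF, add_comm]
  rw [h1, h2, deriv_deriv_comp_sqrt_sq_add hg hg' hp,
    deriv_deriv_comp_sqrt_sq_add hg hg' (by linarith), add_comm (p.2 ^ 2)]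
  field_simp
  ring

lemma hasDerivAt_besselKMoment_comp_mul (α : ℝ) (n : ℕ) {lam r : ℝ} (hlam : 0 < lam)
    (hr : 0 < r) :
    HasDerivAt (fun r => besselKMoment α n (lam * r))
      (-besselKMoment α (n + 1) (lam * r) * lam) r :=
  (hasDerivAt_besselKMoment α n (mul_pos hlam hr)).comp r (hasDerivAt_const_mul lam)

theorem stmt_10_general (α lam : ℝ) (hlam : 0 < lam) :
    ∀ p : ℝ × ℝ, p ≠ 0 →
      -(deriv (fun s => deriv (fun t => Grad2 α lam (t, p.2)) s) p.1 +
          deriv (fun s => deriv (fun t => Grad2 α lam (p.1, t)) s) p.2) +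
        (α ^ 2 / (p.1 ^ 2 + p.2 ^ 2)) * Grad2 α lam p + lam ^ 2 * Grad2 α lam p = 0 := by
  intro p hp
  have hpos : 0 < p.1 ^ 2 + p.2 ^ 2 := by
    rcases p with ⟨a, b⟩
    rcases not_and_or.mp (Prod.mk_eq_zero.not.mp hp) with h | h <;> positivity
  have hF (q : ℝ × ℝ) :
      Grad2 α lam q = lam ^ α * besselKMoment α 0 (lam * √(q.1 ^ 2 + q.2 ^ 2)) := by
    rw [Grad2, besselKMoment_zero]
  have hg (r : ℝ) (hr : 0 < r) :=
    (hasDerivAt_besselKMoment_comp_mul α 0 hlam hr).const_mul (lam ^ α)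
  have hg' (r : ℝ) (hr : 0 < r) :=
    ((hasDerivAt_besselKMoment_comp_mul α 1 hlam hr).neg.mul_const lam).const_mul (lam ^ α)
  rw [laplacian_of_radial hF hg hg' hpos, hF p]
  have hR := sq_sqrt hpos.le
  have hRpos := sqrt_pos.mpr hpos
  have hode := besselKMoment_ode α (mul_pos hlam hRpos)
  generalize √(p.1 ^ 2 + p.2 ^ 2) = R at hR hRpos hode ⊢
  rw [← hR, zero_add, one_add_one_eq_two]
  field_simp
  linear_combination (-lam ^ α) * hode

/-- For the radial, real-valued function `G_λ`, the magnetic Schrödinger equation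
`((-i∇ + A_α)² + λ²) G_λ = 0` on `ℝ² \ {0}` reduces (using `A_α · ∇G_λ = 0` and
`∇ · A_α = 0`, with `|A_α(x)|² = α²/|x|²`) to `-ΔG_λ + (α²/|x|²) G_λ + λ² G_λ = 0`. -/
theorem stmt_10 (α lam : ℝ) (hα0 : 0 < α) (hα1 : α < 1) (hlam : 0 < lam) :
    ∀ p : ℝ × ℝ, p ≠ 0 →
      -(deriv (fun s => deriv (fun t => Grad2 α lam (t, p.2)) s) p.1 +
          deriv (fun s => deriv (fun t => Grad2 α lam (p.1, t)) s) p.2) +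
        (α ^ 2 / (p.1 ^ 2 + p.2 ^ 2)) * Grad2 α lam p + lam ^ 2 * Grad2 α lam p = 0 :=
  stmt_10_general α lam hlam
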